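/- Uniqueness of the single-block Lauricella connection: let V be the (1,1)-tensor field in coordinates u^1,...,u^n given by V^i_j = u^{i-j+1} for i > j, V^i_i = (1 − nε₁)u^1, V^i_j = 0 for i < j (lower-triangular Toeplitz), with u^2 ≠ 0. Then there is at most one torsionless connection ∇ with Christoffel symbols Γ^i_{jk} satisfying ∇e = 0 (i.e. Γ^i_{j1} = Γ^i_{1j} = 0) and d_∇V = 0 (i.e. ∂_i V^k_j + Γ^k_{il}V^l_j = ∂_j V^k_i + Γ^k_{jl}V^l_i for all i,j,k). -/

import Mathlib

/-!
Subtracting the equations `d_∇V = 0` for two such connections kills the derivative terms, so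
for fixed `k` and `x` the difference `D = Γ^k - Γ'^k` is a symmetric matrix with `D e₁ = 0`
for which `D V` is again symmetric. In `(D V)_{a,b} = (D V)_{b,a}`, with `V` lower triangular,
the entry `D_{a,b+1}` has coefficient `V^{b+1}_b = u² ≠ 0`, the diagonal terms `c D_{a,b}` and
`c D_{b,a}` cancel, and all other entries lie further right in row `a` or in rows below `a`.
So the entries of `D` vanish row by row from the bottom, right to left within each row.
-/

/-- Partial derivative of `f` with respect to the variable `u^i` at the point `x`. -/
noncomputable def pd (i : ℕ) (f : (ℕ → ℝ) → ℝ) (x : ℕ → ℝ) : ℝ :=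
  deriv (fun t => f (Function.update x i t)) (x i)

open Finset

section LowerToeplitz

variable {R : Type*} [CommRing R]

/-- The lower triangular Toeplitz matrix with diagonal `c` and entries `v 2, v 3, …` on the
successive subdiagonals (indices are 1-based). -/
def lowerToeplitz (c : R) (v : ℕ → R) (k j : ℕ) : R :=
  if j < k then v (k - j + 1) else if k = j then c else 0

variable {c : R} {v : ℕ → R} {n q : ℕ} {f : ℕ → R}

theorem sum_mul_lowerToeplitz_of_eq_zero_above (hq : 1 ≤ q) (hqn : q ≤ n)
    (hf : ∀ l, q < l → l ≤ n → f l = 0) :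
    ∑ l ∈ Icc 1 n, f l * lowerToeplitz c v l q = f q * c := by
  rw [sum_eq_single_of_mem q (mem_Icc.2 ⟨hq, hqn⟩)]
  · simp [lowerToeplitz]
  intro l hl hlq
  rcases lt_or_gt_of_ne hlq with hlt | hgt
  · simp [lowerToeplitz, hlt.not_gt, hlt.ne]
  · rw [hf l hgt (mem_Icc.1 hl).2, zero_mul]

theorem sum_mul_lowerToeplitz_of_eq_zero_above_succ (hq : 1 ≤ q) (hqn : q < n)
    (hf : ∀ l, q + 1 < l → l ≤ n → f l = 0) :
    ∑ l ∈ Icc 1 n, f l * lowerToeplitz c v l q = f q * c + f (q + 1) * v 2 := by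
  rw [sum_eq_add_of_mem q (q + 1) (mem_Icc.2 ⟨hq, hqn.le⟩) (mem_Icc.2 ⟨by omega, hqn⟩)
    (by omega)]
  · simp [lowerToeplitz]
  rintro l hl ⟨hlq, hlq'⟩
  rcases lt_or_gt_of_ne hlq with hlt | hgt
  · simp [lowerToeplitz, hlt.not_gt, hlt.ne]
  · rw [hf l (by omega) (mem_Icc.1 hl).2, zero_mul]

end LowerToeplitz

section Uniqueness

variable {R : Type*} [CommRing R] [NoZeroDivisors R] {c : R} {v : ℕ → R} {n : ℕ}
  {D : ℕ → ℕ → R}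

/-- `D V` is symmetric, where `V = lowerToeplitz c v`. -/
def MulLowerToeplitzSymm (n : ℕ) (c : R) (v : ℕ → R) (D : ℕ → ℕ → R) : Prop :=
  ∀ p q, 1 ≤ p → p ≤ n → 1 ≤ q → q ≤ n →
    ∑ l ∈ Icc 1 n, D p l * lowerToeplitz c v l q = ∑ l ∈ Icc 1 n, D q l * lowerToeplitz c v l p

theorem eq_zero_of_mulLowerToeplitzSymm_step (hv : v 2 ≠ 0) (hD : MulLowerToeplitzSymm n c v D)
    {a b : ℕ} (ha : 1 ≤ a) (han : a ≤ n) (hb : 1 ≤ b) (hbn : b < n) (hsymm : D a b = D b a)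
    (hrow : ∀ l, b + 1 < l → l ≤ n → D a l = 0) (hcol : ∀ l, a < l → l ≤ n → D b l = 0) :
    D a (b + 1) = 0 := by
  have h := hD a b ha han hb hbn.le
  rw [sum_mul_lowerToeplitz_of_eq_zero_above_succ hb hbn hrow,
    sum_mul_lowerToeplitz_of_eq_zero_above ha han hcol, hsymm, add_eq_left] at h
  exact (mul_eq_zero.1 h).resolve_right hv

theorem eq_zero_of_mulLowerToeplitzSymm (hv : v 2 ≠ 0) (hsymm : ∀ a b, D a b = D b a)
    (hD1 : ∀ a, D a 1 = 0) (hD : MulLowerToeplitzSymm n c v D) {a b : ℕ}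
    (ha : 1 ≤ a) (han : a ≤ n) (hb : 1 ≤ b) (hbn : b ≤ n) : D a b = 0 := by
  rcases lt_or_ge a b with hab | hba
  · rw [hsymm]
    exact eq_zero_of_mulLowerToeplitzSymm hv hsymm hD1 hD hb hbn ha han
  obtain rfl | hb1 := hb.eq_or_lt
  · exact hD1 a
  obtain ⟨b, rfl⟩ : ∃ b', b = b' + 1 := ⟨b - 1, by omega⟩
  refine eq_zero_of_mulLowerToeplitzSymm_step hv hD ha han (by omega) (by omega) (hsymm a b)
    (fun l hl hln => eq_zero_of_mulLowerToeplitzSymm hv hsymm hD1 hD ha han (by omega) hln)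
    (fun l hl hln => ?_)
  rw [hsymm]
  exact eq_zero_of_mulLowerToeplitzSymm hv hsymm hD1 hD (by omega) hln (by omega) (by omega)
termination_by (n - a, n - b)

end Uniqueness

/-- **uniqueness of the single-block Lauricella connection.** Let `V` be
the lower-triangular Toeplitz tensor `V^i_j = u^{i-j+1}` for `i > j`,
`V^i_i = (1 − nε₁)u¹`, `V^i_j = 0` for `i < j` (indices 1-based).  Any two torsionless
connections `Γ`, `Γ'` with `∇e = 0` (i.e. `Γ^i_{j1} = 0`) satisfying `d_∇V = 0` agree
wherever `u² ≠ 0`. -/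
theorem statement18 (n : ℕ) (ε₁ : ℝ)
    (V : ℕ → ℕ → (ℕ → ℝ) → ℝ)
    (hV : ∀ (k j : ℕ) x, V k j x =
      if j < k then x (k - j + 1)
      else if k = j then (1 - (n : ℝ) * ε₁) * x 1 else 0)
    (Γ Γ' : ℕ → ℕ → ℕ → (ℕ → ℝ) → ℝ)
    (hsym : ∀ k i j x, Γ k i j x = Γ k j i x)
    (hsym' : ∀ k i j x, Γ' k i j x = Γ' k j i x)
    (he : ∀ k j x, Γ k j 1 x = 0)
    (he' : ∀ k j x, Γ' k j 1 x = 0)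
    (hdV : ∀ k i j : ℕ, 1 ≤ k → k ≤ n → 1 ≤ i → i ≤ n → 1 ≤ j → j ≤ n → ∀ x,
      pd i (V k j) x + (∑ l ∈ Finset.Icc 1 n, Γ k i l x * V l j x)
        - pd j (V k i) x - (∑ l ∈ Finset.Icc 1 n, Γ k j l x * V l i x) = 0)
    (hdV' : ∀ k i j : ℕ, 1 ≤ k → k ≤ n → 1 ≤ i → i ≤ n → 1 ≤ j → j ≤ n → ∀ x,
      pd i (V k j) x + (∑ l ∈ Finset.Icc 1 n, Γ' k i l x * V l j x)
        - pd j (V k i) x - (∑ l ∈ Finset.Icc 1 n, Γ' k j l x * V l i x) = 0) :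
    ∀ k i j : ℕ, 1 ≤ k → k ≤ n → 1 ≤ i → i ≤ n → 1 ≤ j → j ≤ n →
      ∀ x : ℕ → ℝ, x 2 ≠ 0 → Γ k i j x = Γ' k i j x := by
  intro k i j hk hkn hi hin hj hjn x hx
  have hV' : ∀ l q, V l q x = lowerToeplitz ((1 - (n : ℝ) * ε₁) * x 1) x l q :=
    fun l q => hV l q x
  have hD : MulLowerToeplitzSymm n ((1 - (n : ℝ) * ε₁) * x 1) x
      (fun a b => Γ k a b x - Γ' k a b x) := by
    intro p q hp hpn hq hqn
    have h := hdV k p q hk hkn hp hpn hq hqn x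
    have h' := hdV' k p q hk hkn hp hpn hq hqn x
    simp only [hV', sub_mul, sum_sub_distrib] at h h' ⊢
    linarith
  refine sub_eq_zero.1 (eq_zero_of_mulLowerToeplitzSymm hx (fun a b => ?_) (fun a => ?_) hD
    hi hin hj hjn)
  · rw [hsym, hsym']
  · rw [he, he', sub_self]
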